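/- arXiv:1608.04471 — 2 statements merged into one kernel-verified Lean document; each statement's English description precedes it below -/
import Mathlib

section
/- Let p and q be smooth, strictly positive probability densities on ℝ^d, and set φ(x) = ∇ log p(x) − ∇ log q(x). Assume that q(x) φ(x) → 0 as ‖x‖ → ∞, that x ↦ q(x) φ_j(x) is C^1 with integrable gradient for each coordinate j, and that all integrands below are integrable. Then ∫ q(x) ( ⟪φ(x), ∇ log p(x)⟫ + div φ(x) ) dx = ∫ q(x) ‖∇ log p(x) − ∇ log q(x)‖₂² dx. -/
open MeasureTheory Filter RealInnerProductSpace

noncomputable section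

/-- `ℝ^d` with its Euclidean structure. -/
abbrev Ed (d : ℕ) := EuclideanSpace ℝ (Fin d)

/-- The divergence `div φ (x) = ∑ i ∂_i φ_i(x)` of a vector field `φ : ℝ^d → ℝ^d`. -/
def divergence {d : ℕ} (φ : Ed d → Ed d) (x : Ed d) : ℝ :=
  ∑ i, fderiv ℝ φ x (EuclideanSpace.single i 1) i

lemma aux_integral_deriv_eq_zero (h h' : ℝ → ℝ)
    (hd : ∀ x, HasDerivAt h (h' x) x) (hi : Integrable h')
    (htop : Tendsto h atTop (nhds 0)) (hbot : Tendsto h atBot (nhds 0)) :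
    ∫ x, h' x = 0 := by
  rw [← intervalIntegral.integral_Iic_add_Ioi (b := (0:ℝ)) hi.integrableOn hi.integrableOn,
    integral_Iic_of_hasDerivAt_of_tendsto' (fun x _ => hd x) hi.integrableOn hbot,
    integral_Ioi_of_hasDerivAt_of_tendsto' (fun x _ => hd x) hi.integrableOn htop]
  ring

lemma fderiv_apply_eq_gradient {d : ℕ} (g : Ed d → ℝ) (x : Ed d) (j : Fin d) :
    fderiv ℝ g x (EuclideanSpace.single j 1) = gradient g x j := by
  have h : ⟪gradient g x, EuclideanSpace.single j 1⟫
      = fderiv ℝ g x (EuclideanSpace.single j 1) := by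
    rw [gradient]; exact InnerProductSpace.toDual_symm_apply
  rw [← h, EuclideanSpace.inner_single_right]
  simp

lemma abs_coord_le_norm {d : ℕ} (x : Ed d) (j : Fin d) : |x j| ≤ ‖x‖ := by
  have h := abs_real_inner_le_norm x (EuclideanSpace.single j 1)
  rw [EuclideanSpace.inner_single_right, EuclideanSpace.norm_single] at h
  simpa using h

lemma aux_integral_pderiv_eq_zero {d : ℕ} (g : Ed d → ℝ) (hg : ContDiff ℝ 1 g)
    (hint : Integrable (fun x => gradient g x))
    (hdec : Tendsto g (Filter.comap norm Filter.atTop) (nhds 0)) (j : Fin d) :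
    ∫ x, fderiv ℝ g x (EuclideanSpace.single j 1) = 0 := by
  cases d with
  | zero => exact j.elim0
  | succ n =>
    set D : Ed (n+1) → ℝ := fun x => fderiv ℝ g x (EuclideanSpace.single j 1) with hD
    have hDint : Integrable D := by
      have h1 := (EuclideanSpace.proj j : Ed (n+1) →L[ℝ] ℝ).integrable_comp hint
      have h2 : (fun x => (EuclideanSpace.proj j) (gradient g x)) = D := by
        funext x
        exact (fderiv_apply_eq_gradient g x j).symm
      rwa [h2] at h1
    let E : (ℝ × (Fin n → ℝ)) ≃ᵐ Ed (n+1) :=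
      (MeasurableEquiv.piFinSuccAbove (fun _ => ℝ) j).symm.trans
        (MeasurableEquiv.toLp 2 (Fin (n+1) → ℝ))
    have hE : MeasurePreserving E volume volume :=
      ((EuclideanSpace.volume_preserving_symm_measurableEquiv_toLp (Fin (n+1))).symm).comp
        ((volume_preserving_piFinSuccAbove (fun _ : Fin (n+1) => ℝ) j).symm)
    have hEapp : ∀ z : ℝ × (Fin n → ℝ), E z = (Fin.insertNth j z.1 z.2 : Fin (n+1) → ℝ) := by
      intro z; rfl
    have h1 : ∫ x, D x = ∫ z : ℝ × (Fin n → ℝ), D (E z) :=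
      (hE.integral_comp E.measurableEmbedding D).symm
    have h2 : Integrable (fun z : ℝ × (Fin n → ℝ) => D (E z)) :=
      (hE.integrable_comp_emb E.measurableEmbedding).2 hDint
    have h2' : Integrable (fun z : ℝ × (Fin n → ℝ) => D (E z))
        ((volume : Measure ℝ).prod (volume : Measure (Fin n → ℝ))) := by
      rwa [← Measure.volume_eq_prod]
    rw [h1, Measure.volume_eq_prod, integral_prod_symm _ h2']
    have hslice := h2'.prod_left_ae
    rw [show (0:ℝ) = ∫ (_ : Fin n → ℝ), (0:ℝ) by simp]
    apply integral_congr_ae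
    filter_upwards [hslice] with y hy
    -- slice: ∫ t, D (E (t, y)) = 0
    set v : Ed (n+1) := EuclideanSpace.single j 1 with hv
    set c : ℝ → Ed (n+1) := fun t => E (t, y) with hc
    have hcj : ∀ t, c t j = t := by
      intro t; rw [hc]; simp only [hEapp]; simp [Fin.insertNth_apply_same]
    have hcline : ∀ t, c t = c 0 + t • v := by
      intro t
      ext i
      have : (c 0 + t • v) i = c 0 i + t * v i := rfl
      rw [this]
      rcases eq_or_ne i j with rfl | hij
      · rw [hcj, hcj]
        simp [hv, EuclideanSpace.single_apply]
      · obtain ⟨k, rfl⟩ := Fin.exists_succAbove_eq hij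
        simp only [hc, hEapp]
        rw [Fin.insertNth_apply_succAbove, Fin.insertNth_apply_succAbove]
        have : v (j.succAbove k) = 0 := by
          simp [hv, EuclideanSpace.single_apply, (Fin.succAbove_ne j k)]
        rw [this, mul_zero, add_zero]
    have hcderiv : ∀ t : ℝ, HasDerivAt c v t := by
      intro t
      have h0 : HasDerivAt (fun s : ℝ => c 0 + s • v) v t := by
        simpa using ((hasDerivAt_id t).smul_const v).const_add (c 0)
      exact h0.congr_deriv rfl |>.congr_of_eventuallyEq
        (Filter.Eventually.of_forall fun s => (hcline s))
    have hderiv : ∀ t : ℝ, HasDerivAt (fun s => g (c s)) (D (c t)) t := by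
      intro t
      exact ((hg.differentiable one_ne_zero (c t)).hasFDerivAt.comp_hasDerivAt t (hcderiv t))
    have hnorm : ∀ t : ℝ, |t| ≤ ‖c t‖ := by
      intro t
      have := abs_coord_le_norm (c t) j
      rwa [hcj] at this
    have htop : Tendsto (fun t => g (c t)) atTop (nhds 0) := by
      refine hdec.comp ?_
      rw [tendsto_comap_iff]
      exact tendsto_atTop_mono hnorm tendsto_abs_atTop_atTop
    have hbot : Tendsto (fun t => g (c t)) atBot (nhds 0) := by
      refine hdec.comp ?_
      rw [tendsto_comap_iff]
      exact tendsto_atTop_mono hnorm tendsto_abs_atBot_atTop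
    exact aux_integral_deriv_eq_zero (fun t => g (c t)) (fun t => D (c t)) hderiv hy htop hbot

/-- For smooth strictly positive densities `p, q` on `ℝ^d` and
`φ = ∇ log p − ∇ log q`, under the stated decay and integrability conditions,
`∫ q(x)(⟪φ(x), ∇ log p(x)⟫ + div φ(x)) dx = ∫ q(x) ‖∇ log p(x) − ∇ log q(x)‖₂² dx`,
i.e. the expected trace of the Stein operator equals the Fisher divergence. -/
theorem expected_stein_eq_fisher_divergence {d : ℕ}
    (p q : Ed d → ℝ) (φ : Ed d → Ed d)
    (hp_smooth : ContDiff ℝ (⊤ : ℕ∞) p) (hq_smooth : ContDiff ℝ (⊤ : ℕ∞) q)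
    (hp_pos : ∀ x, 0 < p x) (hq_pos : ∀ x, 0 < q x)
    (hp_prob : ∫ x, p x = 1) (hq_prob : ∫ x, q x = 1)
    (hφ : ∀ x, φ x = gradient (fun y => Real.log (p y)) x
        - gradient (fun y => Real.log (q y)) x)
    -- `q(x) φ(x) → 0` as `‖x‖ → ∞`:
    (h_decay : Tendsto (fun x => q x • φ x) (Filter.comap norm Filter.atTop) (nhds 0))
    -- `x ↦ q(x) φ_j(x)` is C¹ with integrable gradient for each coordinate `j`:
    (h_C1 : ∀ j : Fin d, ContDiff ℝ 1 (fun x => q x * φ x j))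
    (h_grad_int : ∀ j : Fin d, Integrable (fun x => gradient (fun y => q y * φ y j) x))
    -- all integrands below are integrable:
    (h_int1 : Integrable (fun x =>
      q x * (⟪φ x, gradient (fun y => Real.log (p y)) x⟫ + divergence φ x)))
    (h_int2 : Integrable (fun x => q x * ‖gradient (fun y => Real.log (p y)) x
        - gradient (fun y => Real.log (q y)) x‖ ^ 2)) :
    ∫ x, q x * (⟪φ x, gradient (fun y => Real.log (p y)) x⟫ + divergence φ x)
      = ∫ x, q x * ‖gradient (fun y => Real.log (p y)) x
          - gradient (fun y => Real.log (q y)) x‖ ^ 2 := by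
  have hqdiff : Differentiable ℝ q := hq_smooth.differentiable (by simp)
  have hlogp : ContDiff ℝ (⊤ : ℕ∞) (fun y => Real.log (p y)) :=
    hp_smooth.log (fun x => (hp_pos x).ne')
  have hlogq : ContDiff ℝ (⊤ : ℕ∞) (fun y => Real.log (q y)) :=
    hq_smooth.log (fun x => (hq_pos x).ne')
  set Gp := gradient (fun y => Real.log (p y)) with hGpdef
  set Gq := gradient (fun y => Real.log (q y)) with hGqdef
  have hgrad_smooth : ∀ f : Ed d → ℝ, ContDiff ℝ (⊤ : ℕ∞) f → ContDiff ℝ (⊤ : ℕ∞) (gradient f) := by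
    intro f hf
    have h1 : ContDiff ℝ (⊤ : ℕ∞) (fun x => fderiv ℝ f x) := hf.fderiv_right (by simp)
    exact ((InnerProductSpace.toDual ℝ (Ed d)).symm.contDiff).comp h1
  have hφ_eq : φ = fun x => Gp x - Gq x := funext hφ
  have hφ_smooth : ContDiff ℝ (⊤ : ℕ∞) φ := by
    rw [hφ_eq]
    exact (hgrad_smooth _ hlogp).sub (hgrad_smooth _ hlogq)
  have hφdiff : Differentiable ℝ φ := hφ_smooth.differentiable (by simp)
  -- gradient of log q
  have hGqx : ∀ x, Gq x = (q x)⁻¹ • gradient q x := by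
    intro x
    have hf : HasFDerivAt (fun y => Real.log (q y)) ((q x)⁻¹ • fderiv ℝ q x) x := by
      simpa [Function.comp_def] using (Real.hasDerivAt_log (hq_pos x).ne').comp_hasFDerivAt x (hqdiff x).hasFDerivAt
    rw [hGqdef]
    simp only [gradient, hf.fderiv, _root_.map_smul]
  -- the pointwise product-rule identity
  have hkey : ∀ x, (∑ j, fderiv ℝ (fun y => q y * φ y j) x (EuclideanSpace.single j 1))
      = q x * ⟪φ x, Gq x⟫ + q x * divergence φ x := by
    intro x
    have hterm : ∀ j : Fin d, fderiv ℝ (fun y => q y * φ y j) x (EuclideanSpace.single j 1)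
        = fderiv ℝ q x (EuclideanSpace.single j 1) * φ x j
          + q x * (fderiv ℝ φ x (EuclideanSpace.single j 1)) j := by
      intro j
      have h1 : HasFDerivAt (fun y => φ y j)
          ((EuclideanSpace.proj j).comp (fderiv ℝ φ x)) x :=
        (EuclideanSpace.proj (𝕜 := ℝ) j).hasFDerivAt.comp x (hφdiff x).hasFDerivAt
      have h2 := (hqdiff x).hasFDerivAt.mul' h1
      rw [show (fun y => q y * φ y j) = (q * fun y => φ y j) from rfl, h2.fderiv]
      simp
      ring
    rw [Finset.sum_congr rfl (fun j _ => hterm j), Finset.sum_add_distrib, ← Finset.mul_sum]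
    congr 1
    · -- ∑ j, ∂_j q * φ_j = q ⟪φ, Gq⟫
      have hsum : (∑ j, fderiv ℝ q x (EuclideanSpace.single j 1) * φ x j)
          = ⟪φ x, gradient q x⟫ := by
        rw [real_inner_comm]
        simp only [PiLp.inner_apply, RCLike.inner_apply, conj_trivial]
        exact Finset.sum_congr rfl fun j _ => by rw [fderiv_apply_eq_gradient, mul_comm]
      rw [hsum, hGqx x, real_inner_smul_right, mul_inv_cancel_left₀ (hq_pos x).ne']
  -- per-coordinate integrability
  have Dint : ∀ j : Fin d, Integrable
      (fun x => fderiv ℝ (fun y => q y * φ y j) x (EuclideanSpace.single j 1)) := by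
    intro j
    have h1 := (EuclideanSpace.proj (𝕜 := ℝ) j).integrable_comp (h_grad_int j)
    have h2 : (fun x => (EuclideanSpace.proj (𝕜 := ℝ) j) (gradient (fun y => q y * φ y j) x))
        = fun x => fderiv ℝ (fun y => q y * φ y j) x (EuclideanSpace.single j 1) := by
      funext x
      exact (fderiv_apply_eq_gradient _ x j).symm
    rwa [h2] at h1
  have hS_int : Integrable (fun x =>
      ∑ j, fderiv ℝ (fun y => q y * φ y j) x (EuclideanSpace.single j 1)) :=
    integrable_finset_sum _ (fun j _ => Dint j)
  -- the divergence integral vanishes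
  have hS_zero : (∫ x, ∑ j, fderiv ℝ (fun y => q y * φ y j) x (EuclideanSpace.single j 1)) = 0 := by
    rw [integral_finset_sum _ (fun j _ => Dint j)]
    refine Finset.sum_eq_zero fun j _ => ?_
    refine aux_integral_pderiv_eq_zero _ (h_C1 j) (h_grad_int j) ?_ j
    have h0 := ((EuclideanSpace.proj (𝕜 := ℝ) j).continuous.tendsto 0).comp h_decay
    simpa [Function.comp_def] using h0
  -- pointwise main identity
  have hpt : ∀ x, q x * (⟪φ x, Gp x⟫ + divergence φ x)
      = q x * ‖Gp x - Gq x‖ ^ 2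
        + ∑ j, fderiv ℝ (fun y => q y * φ y j) x (EuclideanSpace.single j 1) := by
    intro x
    rw [hkey x]
    have hsplit : ⟪φ x, Gp x⟫ = ‖Gp x - Gq x‖ ^ 2 + ⟪φ x, Gq x⟫ := by
      rw [hφ x, ← real_inner_self_eq_norm_sq, ← inner_add_right, sub_add_cancel]
    rw [hsplit]
    ring
  calc ∫ x, q x * (⟪φ x, Gp x⟫ + divergence φ x)
      = ∫ x, (q x * ‖Gp x - Gq x‖ ^ 2
        + ∑ j, fderiv ℝ (fun y => q y * φ y j) x (EuclideanSpace.single j 1)) := by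
        exact integral_congr_ae (Filter.Eventually.of_forall hpt)
    _ = (∫ x, q x * ‖Gp x - Gq x‖ ^ 2)
        + ∫ x, ∑ j, fderiv ℝ (fun y => q y * φ y j) x (EuclideanSpace.single j 1) :=
        integral_add h_int2 hS_int
    _ = ∫ x, q x * ‖Gp x - Gq x‖ ^ 2 := by rw [hS_zero, add_zero]
end
end

section
/- Let p be a smooth, strictly positive, bounded probability density on ℝ^d with integrable gradient ∇p, let h > 0, and let k(x, x') = exp(−‖x − x'‖₂²/h) be the RBF kernel. Then the RBF kernel is in the Stein class of p: for every fixed x' ∈ ℝ^d and every coordinate j ∈ {1, …, d}, ∫ ( ∂_{x_j} log p(x) · k(x, x') + ∂_{x_j} k(x, x') ) p(x) dx = 0. -/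
open MeasureTheory Filter RealInnerProductSpace

noncomputable section

/-- Key scalar inequality: `t * exp (-t²/h) ≤ √h`. -/
lemma key_ineq {h : ℝ} (hh : 0 < h) {t : ℝ} (ht : 0 ≤ t) :
    t * Real.exp (-t ^ 2 / h) ≤ Real.sqrt h := by
  set s := Real.sqrt h with hs_def
  have hs : 0 < s := Real.sqrt_pos.2 hh
  have hs2 : s ^ 2 = h := Real.sq_sqrt hh.le
  have he : t ^ 2 / h + 1 ≤ Real.exp (t ^ 2 / h) := Real.add_one_le_exp _
  have hE : 0 < Real.exp (-t ^ 2 / h) := Real.exp_pos _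
  have hmul : Real.exp (-t ^ 2 / h) * Real.exp (t ^ 2 / h) = 1 := by
    rw [← Real.exp_add]; ring_nf; exact Real.exp_zero
  have hu : t ^ 2 = (t ^ 2 / h) * s ^ 2 := by rw [hs2, div_mul_cancel₀ _ hh.ne']
  have h3 : 0 ≤ s * Real.exp (t ^ 2 / h) - t := by
    nlinarith [sq_nonneg (t - s), mul_nonneg (div_nonneg (sq_nonneg t) hh.le) hs.le]
  nlinarith [mul_nonneg h3 hE.le]

/-- Directional derivatives are inner products against the gradient. -/
lemma fderiv_eq_inner_gradient {d : ℕ} (f : Ed d → ℝ) (x w : Ed d) :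
    fderiv ℝ f x w = ⟪gradient f x, w⟫ := by
  unfold gradient
  exact (InnerProductSpace.toDual_symm_apply).symm

/-- Coordinates of the gradient are directional derivatives. -/
lemma gradient_coord {d : ℕ} (f : Ed d → ℝ) (x : Ed d) (j : Fin d) :
    gradient f x j = fderiv ℝ f x (EuclideanSpace.single j (1:ℝ)) := by
  rw [fderiv_eq_inner_gradient, EuclideanSpace.inner_single_right]
  simp

/-- Let `p` be a smooth, strictly positive, bounded probability density on `ℝ^d`
with integrable gradient `∇p`, and let `k(x,x') = exp(−‖x−x'‖₂²/h)` with `h > 0` be the RBF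
kernel. Then the RBF kernel is in the Stein class of `p`: for every fixed `x'` and coordinate `j`,
`∫ (∂_{x_j} log p(x) · k(x,x') + ∂_{x_j} k(x,x')) p(x) dx = 0`. -/
theorem rbf_kernel_in_stein_class {d : ℕ}
    (p : Ed d → ℝ)
    (hp_smooth : ContDiff ℝ (⊤ : ℕ∞) p) (hp_pos : ∀ x, 0 < p x) (hp_prob : ∫ x, p x = 1)
    (hp_bdd : ∃ C, ∀ x, p x ≤ C)
    (hp_grad_int : Integrable (fun x => gradient p x))
    (h : ℝ) (hh : 0 < h)
    (k : Ed d → Ed d → ℝ)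
    (hk : ∀ x x', k x x' = Real.exp (-‖x - x'‖ ^ 2 / h)) :
    ∀ (x' : Ed d) (j : Fin d),
      ∫ x, (gradient (fun y => Real.log (p y)) x j * k x x'
        + gradient (fun y => k y x') x j) * p x = 0 := by
  intro x' j
  set v : Ed d := EuclideanSpace.single j (1:ℝ) with hv_def
  have hvnorm : ‖v‖ = 1 := by simp [hv_def]
  set g : Ed d → ℝ := (fun y => Real.exp (-‖y - x'‖ ^ 2 / h)) with hg_def
  have hkg : ∀ x, k x x' = g x := fun x => by rw [hk, hg_def]
  have hgk : (fun y => k y x') = g := funext hkg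
  -- smoothness of p and g
  have hg_smooth : ContDiff ℝ (⊤ : ℕ∞) g := by
    apply Real.contDiff_exp.comp
    exact (((contDiff_id.sub contDiff_const).norm_sq ℝ).neg).div_const h
  have hp_diff : Differentiable ℝ p := hp_smooth.differentiable (by simp)
  have hg_diff : Differentiable ℝ g := hg_smooth.differentiable (by simp)
  have hp_cont : Continuous p := hp_smooth.continuous
  have hg_cont : Continuous g := hg_smooth.continuous
  -- explicit derivative of g
  have hgd : ∀ x : Ed d, HasFDerivAt g
      (((-1/h) * Real.exp (-‖x - x'‖ ^ 2 / h)) • ((2:ℝ) • (innerSL ℝ (x - x')))) x := by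
    intro x
    have h1 : HasFDerivAt (fun y : Ed d => ‖y - x'‖ ^ 2) ((2:ℝ) • (innerSL ℝ (x - x'))) x := by
      have h0 := ((hasFDerivAt_id x).sub_const x').norm_sq
      simpa [two_smul] using h0
    have h2 := (h1.const_mul (-1/h)).exp
    have hfun : g = fun y : Ed d => Real.exp (-1/h * ‖y - x'‖ ^ 2) := by
      funext y; rw [hg_def]; ring_nf
    rw [hfun]
    have hexp : Real.exp (-‖x - x'‖ ^ 2 / h) = Real.exp (-1/h * ‖x - x'‖ ^ 2) := by
      congr 1
      ring
    have hsc : ((-1/h) * Real.exp (-‖x - x'‖ ^ 2 / h)) • ((2:ℝ) • (innerSL ℝ (x - x')))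
        = Real.exp (-1/h * ‖x - x'‖ ^ 2) • ((-1/h) • ((2:ℝ) • (innerSL ℝ (x - x')))) := by
      rw [hexp, smul_smul, smul_smul, smul_smul]
      congr 1
      ring
    rw [hsc]
    exact h2
  -- bound on the derivative of g
  set M : ℝ := 2 / h * Real.sqrt h with hM_def
  have hgnorm : ∀ x : Ed d, ‖fderiv ℝ g x‖ ≤ M := by
    intro x
    rw [(hgd x).fderiv, norm_smul, norm_smul, innerSL_apply_norm]
    have hk1 := key_ineq hh (norm_nonneg (x - x'))
    have hE : 0 < Real.exp (-‖x - x'‖ ^ 2 / h) := Real.exp_pos _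
    have habs : ‖(-1/h) * Real.exp (-‖x - x'‖ ^ 2 / h)‖
        = 1/h * Real.exp (-‖x - x'‖ ^ 2 / h) := by
      rw [Real.norm_eq_abs, abs_mul, abs_of_pos hE, abs_div, abs_neg, abs_one, abs_of_pos hh]
    rw [habs, Real.norm_ofNat]
    rw [hM_def]
    have hhinv : 0 < 1/h := by positivity
    calc 1/h * Real.exp (-‖x - x'‖ ^ 2 / h) * (2 * ‖x - x'‖)
        = 2/h * (‖x - x'‖ * Real.exp (-‖x - x'‖ ^ 2 / h)) := by ring
      _ ≤ 2/h * Real.sqrt h := by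
          apply mul_le_mul_of_nonneg_left hk1 (by positivity)
  -- integrability facts
  have int_p : Integrable p := by
    by_contra hc
    rw [integral_undef hc] at hp_prob
    norm_num at hp_prob
  have hg_le_one : ∀ x : Ed d, g x ≤ 1 := by
    intro x
    rw [hg_def]
    exact Real.exp_le_one_iff.2
      (div_nonpos_of_nonpos_of_nonneg (neg_nonpos.2 (sq_nonneg _)) hh.le)
  have hg_pos : ∀ x : Ed d, 0 < g x := fun x => Real.exp_pos _
  have hfg : Integrable (fun x => p x * g x) := by
    apply int_p.mono' ((hp_cont.mul hg_cont).aestronglyMeasurable)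
    filter_upwards with x
    rw [Real.norm_eq_abs, Pi.mul_apply, abs_of_nonneg (mul_nonneg (hp_pos x).le (hg_pos x).le)]
    calc p x * g x ≤ p x * 1 := mul_le_mul_of_nonneg_left (hg_le_one x) (hp_pos x).le
      _ = p x := mul_one _
  have hf'g : Integrable (fun x => fderiv ℝ p x v * g x) := by
    apply (hp_grad_int.norm).mono'
    · exact (((hp_smooth.continuous_fderiv (by simp)).clm_apply continuous_const).mul
        hg_cont).aestronglyMeasurable
    · filter_upwards with x
      have h1 : |fderiv ℝ p x v| ≤ ‖gradient p x‖ := by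
        rw [fderiv_eq_inner_gradient]
        calc |⟪gradient p x, v⟫| ≤ ‖gradient p x‖ * ‖v‖ := abs_real_inner_le_norm _ _
          _ = ‖gradient p x‖ := by rw [hvnorm, mul_one]
      rw [Real.norm_eq_abs, abs_mul]
      calc |fderiv ℝ p x v| * |g x| ≤ ‖gradient p x‖ * 1 := by
            apply mul_le_mul h1 _ (abs_nonneg _) (norm_nonneg _)
            rw [abs_of_pos (hg_pos x)]; exact hg_le_one x
        _ = ‖gradient p x‖ := mul_one _
  have hfg' : Integrable (fun x => p x * fderiv ℝ g x v) := by
    apply Integrable.mono' (int_p.const_mul M)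
    · exact (hp_cont.mul
        ((hg_smooth.continuous_fderiv (by simp)).clm_apply continuous_const)).aestronglyMeasurable
    · filter_upwards with x
      have h1 : |fderiv ℝ g x v| ≤ M := by
        calc |fderiv ℝ g x v| ≤ ‖fderiv ℝ g x‖ * ‖v‖ := (fderiv ℝ g x).le_opNorm v
          _ ≤ M := by rw [hvnorm, mul_one]; exact hgnorm x
      rw [Real.norm_eq_abs, abs_mul, abs_of_pos (hp_pos x)]
      calc p x * |fderiv ℝ g x v| ≤ p x * M := mul_le_mul_of_nonneg_left h1 (hp_pos x).le
        _ = M * p x := mul_comm _ _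
  -- integration by parts
  have hparts : ∫ x, p x * fderiv ℝ g x v = - ∫ x, fderiv ℝ p x v * g x :=
    integral_mul_fderiv_eq_neg_fderiv_mul_of_integrable hf'g hfg' hfg (fun x _ => hp_diff x) (fun x _ => hg_diff x)
  -- rewrite the integrand
  have hlog : ∀ x, gradient (fun y => Real.log (p y)) x j = (p x)⁻¹ * fderiv ℝ p x v := by
    intro x
    rw [hv_def, gradient_coord]
    have hL : HasFDerivAt (fun y => Real.log (p y)) ((p x)⁻¹ • fderiv ℝ p x) x :=
      ((hp_diff x).hasFDerivAt).log (hp_pos x).ne'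
    rw [hL.fderiv]
    simp
  have hint_eq : ∀ x, (gradient (fun y => Real.log (p y)) x j * k x x'
      + gradient (fun y => k y x') x j) * p x
      = fderiv ℝ p x v * g x + p x * fderiv ℝ g x v := by
    intro x
    rw [hlog x, hkg x, hgk, hv_def, gradient_coord, ← hv_def]
    have hpne : p x ≠ 0 := (hp_pos x).ne'
    field_simp
  rw [funext hint_eq, integral_add hf'g hfg', hparts, add_neg_cancel]
end
end
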